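/- Let y = A·x_S + e where x_S ∈ ℝⁿ is K-sparse with support S, and A satisfies the RIP of order 3K with constant δ_{3K} and of order 4K with constant δ_{4K} < 1. Let U be an index set with |U| ≤ 3K, let u be the least-squares solution on U, and let x' = H_K(u). Then ‖x_S − x'‖ ≤ √((1+2δ_{4K}²)/(1−δ_{4K}²))·‖(x_S)_{\overline{U}}‖ + √3·τ₁·‖e‖, where τ₁ := √(1+δ_{3K})/(1−δ_{4K}). -/

import Mathlib

open Finset

/-- Euclidean norm of a vector. -/
noncomputable def euclNorm {d : ℕ} (x : Fin d → ℝ) : ℝ := Real.sqrt (∑ i, x i ^ 2)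

/-- The support of a vector, as a finite set of indices. -/
noncomputable def supp {d : ℕ} (x : Fin d → ℝ) : Finset (Fin d) :=
  Finset.univ.filter (fun i => x i ≠ 0)

/-- `restrict x T` agrees with `x` on `T` and is zero outside `T`. -/
def restrict {d : ℕ} (x : Fin d → ℝ) (T : Finset (Fin d)) : Fin d → ℝ :=
  fun i => if i ∈ T then x i else 0

/-- `A` satisfies the Restricted Isometry Property of order `L` with constant `δ ∈ (0,1)`. -/
def RIP {m d : ℕ} (A : Matrix (Fin m) (Fin d) ℝ) (L : ℕ) (δ : ℝ) : Prop :=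
  0 < δ ∧ δ < 1 ∧
  ∀ x : Fin d → ℝ, (supp x).card ≤ L →
    (1 - δ) * euclNorm x ^ 2 ≤ euclNorm (A.mulVec x) ^ 2 ∧
    euclNorm (A.mulVec x) ^ 2 ≤ (1 + δ) * euclNorm x ^ 2

/-- `u` is the least-squares solution on the index set `U`: it is supported on `U` and
`y - A u` is orthogonal to `A z` whenever `z` is supported on `U`. -/
def LeastSq {m d : ℕ} (A : Matrix (Fin m) (Fin d) ℝ) (y : Fin m → ℝ)
    (U : Finset (Fin d)) (u : Fin d → ℝ) : Prop :=
  supp u ⊆ U ∧ ∀ z : Fin d → ℝ, supp z ⊆ U →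
    ∑ i, (y i - A.mulVec u i) * A.mulVec z i = 0

/-!
Write `h = x_S - u`, `a = ‖(x_S)_Ū‖` and `V = ‖h_U‖`; since `u` vanishes off `U`,
`‖h‖² = a² + V²`. Testing the normal equations against `h_U` and using that the RIP of order
`4K` makes `⟪A x, A z⟫` deviate from `⟪x, z⟫` by at most `δ₄ ‖x‖ ‖z‖` gives
`V² = ⟪h, h_U⟫ ≤ -⟪e, A h_U⟫ + δ₄ ‖h‖ V ≤ (√(1 + δ₃) ‖e‖ + δ₄ √(a² + V²)) V`, and solving for `V`
yields `V ≤ δ₄ a / √(1 - δ₄²) + √(1 + δ₃) ‖e‖ / (1 - δ₄)`. Thresholding costs at most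
`‖x_S - u_T‖² ≤ a² + 3 V²`: the entries of `x_S` on `U` that `T` misses are paid for by the
entries of `u` that `T` keeps outside `supp x_S`, which are at least as large.
-/

open Matrix

section Euclidean

variable {n : ℕ}

lemma euclNorm_nonneg (x : Fin n → ℝ) : 0 ≤ euclNorm x := Real.sqrt_nonneg _

lemma euclNorm_sq (x : Fin n → ℝ) : euclNorm x ^ 2 = ∑ i, x i ^ 2 :=
  Real.sq_sqrt (by positivity)

lemma euclNorm_sq_eq_dotProduct (x : Fin n → ℝ) : euclNorm x ^ 2 = x ⬝ᵥ x := by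
  rw [euclNorm_sq]
  simp only [dotProduct, sq]

lemma abs_dotProduct_le (x z : Fin n → ℝ) : |x ⬝ᵥ z| ≤ euclNorm x * euclNorm z :=
  abs_le_of_sq_le_sq (by
    rw [mul_pow, euclNorm_sq, euclNorm_sq]
    exact Finset.sum_mul_sq_le_sq_mul_sq _ _ _)
    (mul_nonneg (euclNorm_nonneg x) (euclNorm_nonneg z))

lemma euclNorm_restrict_sq (x : Fin n → ℝ) (P : Finset (Fin n)) :
    euclNorm (restrict x P) ^ 2 = ∑ i ∈ P, x i ^ 2 := by
  simp only [euclNorm_sq, _root_.restrict, apply_ite (· ^ 2)]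
  simp [Finset.sum_ite_mem]

lemma euclNorm_sq_eq_restrict_add_restrict_compl (x : Fin n → ℝ) (P : Finset (Fin n)) :
    euclNorm x ^ 2 = euclNorm (restrict x P) ^ 2 + euclNorm (restrict x Pᶜ) ^ 2 := by
  rw [euclNorm_sq, euclNorm_restrict_sq, euclNorm_restrict_sq, Finset.sum_add_sum_compl]

lemma dotProduct_restrict_self (x : Fin n → ℝ) (P : Finset (Fin n)) :
    x ⬝ᵥ restrict x P = euclNorm (restrict x P) ^ 2 := by
  rw [euclNorm_sq]
  refine Finset.sum_congr rfl fun i _ => ?_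
  by_cases hi : i ∈ P <;> simp [_root_.restrict, hi, sq]

lemma mem_supp {x : Fin n → ℝ} {i : Fin n} : i ∈ supp x ↔ x i ≠ 0 := by
  simp [supp]

lemma eq_zero_of_notMem_supp {x : Fin n → ℝ} {i : Fin n} (hi : i ∉ supp x) : x i = 0 := by
  simpa [mem_supp] using hi

lemma supp_add_smul_subset (x z : Fin n → ℝ) (t : ℝ) : supp (x + t • z) ⊆ supp x ∪ supp z := by
  intro i
  simp only [mem_supp, Finset.mem_union, Pi.add_apply, Pi.smul_apply, smul_eq_mul]
  contrapose!
  rintro ⟨hx, hz⟩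
  simp [hx, hz]

lemma supp_sub_subset (x z : Fin n → ℝ) : supp (x - z) ⊆ supp x ∪ supp z := by
  simpa [sub_eq_add_neg] using supp_add_smul_subset x z (-1)

lemma supp_restrict_subset (x : Fin n → ℝ) (P : Finset (Fin n)) : supp (restrict x P) ⊆ P := by
  intro i
  simp only [mem_supp, _root_.restrict]
  contrapose!
  intro hi
  simp [hi]

lemma restrict_sub_of_supp_subset {x u : Fin n → ℝ} {P : Finset (Fin n)} (hu : supp u ⊆ P) :
    restrict (x - u) Pᶜ = restrict x Pᶜ := by
  ext i
  by_cases hi : i ∈ P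
  · simp [_root_.restrict, hi]
  · simp [_root_.restrict, hi, eq_zero_of_notMem_supp (fun h => hi (hu h))]

end Euclidean

lemma dotProduct_add_smul_self {ι : Type*} [Fintype ι] (v w : ι → ℝ) (t : ℝ) :
    (v + t • w) ⬝ᵥ (v + t • w) = v ⬝ᵥ v + 2 * t * (v ⬝ᵥ w) + t ^ 2 * (w ⬝ᵥ w) := by
  simp only [add_dotProduct, dotProduct_add, smul_dotProduct, dotProduct_smul,
    dotProduct_comm w v, smul_eq_mul]
  ring

namespace RIP

variable {m n L : ℕ} {A : Matrix (Fin m) (Fin n) ℝ} {δ : ℝ}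

lemma euclNorm_mulVec_le (hA : RIP A L δ) {x : Fin n → ℝ} (hx : (supp x).card ≤ L) :
    euclNorm (A *ᵥ x) ≤ √(1 + δ) * euclNorm x := by
  rw [← Real.sqrt_sq (euclNorm_nonneg (A *ᵥ x)), ← Real.sqrt_sq (euclNorm_nonneg x),
    ← Real.sqrt_mul (by linarith [hA.1])]
  exact Real.sqrt_le_sqrt (hA.2.2 x hx).2

/-- The restricted isometry bounds on `x + t • z` and `x - t • z` give
`0 ≤ δ‖z‖² t² - 2 D t + δ‖x‖²` for every `t`, where `D = ⟪Ax, Az⟫ - ⟪x, z⟫`; the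
discriminant of this quadratic is then nonpositive. -/
lemma abs_dotProduct_mulVec_sub_le (hA : RIP A L δ) {x z : Fin n → ℝ}
    (hxz : (supp x ∪ supp z).card ≤ L) :
    |A *ᵥ x ⬝ᵥ A *ᵥ z - x ⬝ᵥ z| ≤ δ * euclNorm x * euclNorm z := by
  have hcard : ∀ t : ℝ, (supp (x + t • z)).card ≤ L := fun t =>
    (Finset.card_le_card (supp_add_smul_subset x z t)).trans hxz
  have hquad : ∀ t : ℝ, 0 ≤ δ * (z ⬝ᵥ z) * (t * t) + (-2 * (A *ᵥ x ⬝ᵥ A *ᵥ z - x ⬝ᵥ z)) * t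
      + δ * (x ⬝ᵥ x) := by
    intro t
    have hplus := (hA.2.2 _ (hcard t)).2
    have hminus := (hA.2.2 _ (hcard (-t))).1
    simp only [euclNorm_sq_eq_dotProduct, mulVec_add, mulVec_smul] at hplus hminus
    simp only [dotProduct_add_smul_self] at hplus hminus
    nlinarith
  have hdisc := discrim_le_zero hquad
  rw [discrim] at hdisc
  refine abs_le_of_sq_le_sq ?_
    (mul_nonneg (mul_nonneg hA.1.le (euclNorm_nonneg x)) (euclNorm_nonneg z))
  rw [mul_pow, mul_pow, euclNorm_sq_eq_dotProduct, euclNorm_sq_eq_dotProduct]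
  nlinarith

end RIP

lemma LeastSq.euclNorm_restrict_sub_le {m n L L' : ℕ} {A : Matrix (Fin m) (Fin n) ℝ}
    {x u : Fin n → ℝ} {e : Fin m → ℝ} {U : Finset (Fin n)} {δ δ' : ℝ}
    (hLS : LeastSq A (A *ᵥ x + e) U u) (hA : RIP A L δ) (hA' : RIP A L' δ')
    (hU : U.card ≤ L') (hxU : (supp x ∪ U).card ≤ L) :
    euclNorm (restrict (x - u) U) ≤ √(1 + δ') * euclNorm e + δ * euclNorm (x - u) := by
  set w := restrict (x - u) U
  have hw : supp w ⊆ U := supp_restrict_subset _ _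
  have horth : A *ᵥ (x - u) ⬝ᵥ A *ᵥ w = -(e ⬝ᵥ A *ᵥ w) := by
    have h0 : (A *ᵥ (x - u) + e) ⬝ᵥ A *ᵥ w = 0 := by
      rw [← hLS.2 w hw, mulVec_sub]
      exact Finset.sum_congr rfl fun i _ => by simp only [Pi.add_apply, Pi.sub_apply]; ring
    rw [add_dotProduct] at h0
    linarith
  have hcard : (supp (x - u) ∪ supp w).card ≤ L :=
    (Finset.card_le_card (Finset.union_subset
      ((supp_sub_subset x u).trans (Finset.union_subset_union_right hLS.1))
      (hw.trans Finset.subset_union_right))).trans hxU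
  have hpolar := abs_le.1 (hA.abs_dotProduct_mulVec_sub_le hcard)
  have hnoise : -(e ⬝ᵥ A *ᵥ w) ≤ euclNorm e * (√(1 + δ') * euclNorm w) :=
    (neg_le_abs _).trans <| (abs_dotProduct_le _ _).trans <| mul_le_mul_of_nonneg_left
      (hA'.euclNorm_mulVec_le ((Finset.card_le_card hw).trans hU)) (euclNorm_nonneg e)
  have hsq : euclNorm w ^ 2 ≤ (√(1 + δ') * euclNorm e + δ * euclNorm (x - u)) * euclNorm w := by
    rw [← dotProduct_restrict_self]
    linarith
  rcases (euclNorm_nonneg w).eq_or_lt with hzero | hpos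
  · rw [← hzero]
    exact add_nonneg (mul_nonneg (Real.sqrt_nonneg _) (euclNorm_nonneg e))
      (mul_nonneg hA.1.le (euclNorm_nonneg _))
  · exact le_of_mul_le_mul_right (by nlinarith) hpos

lemma Finset.sum_le_sum_of_card_le_of_forall_le {ι M : Type*} [AddCommMonoid M] [LinearOrder M]
    [IsOrderedAddMonoid M] {s t : Finset ι} {f : ι → M} (hcard : s.card ≤ t.card)
    (hf : ∀ j ∈ s, ∀ i ∈ t, f j ≤ f i) (hnonneg : ∀ i ∈ t, 0 ≤ f i) :
    ∑ j ∈ s, f j ≤ ∑ i ∈ t, f i := by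
  rcases t.eq_empty_or_nonempty with rfl | ht
  · simp [Finset.card_eq_zero.1 (Nat.le_zero.1 hcard)]
  obtain ⟨a, ha, hmin⟩ := t.exists_min_image f ht
  calc ∑ j ∈ s, f j ≤ s.card • f a := Finset.sum_le_card_nsmul s f _ fun j hj => hf j hj a ha
    _ ≤ t.card • f a := nsmul_le_nsmul_left (hnonneg a ha) hcard
    _ ≤ ∑ i ∈ t, f i := Finset.card_nsmul_le_sum t f _ hmin

lemma euclNorm_sub_restrict_threshold_sq_le {n : ℕ} {x u : Fin n → ℝ} {U T : Finset (Fin n)}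
    (hx : (supp x).card ≤ T.card) (hu : supp u ⊆ U) (hT : ∀ i ∈ T, ∀ j ∉ T, |u j| ≤ |u i|) :
    euclNorm (x - restrict u T) ^ 2 ≤
      euclNorm (restrict x Uᶜ) ^ 2 + 3 * euclNorm (restrict (x - u) U) ^ 2 := by
  set S := supp x
  have hx0 : ∀ i ∉ S, x i = 0 := fun i hi => eq_zero_of_notMem_supp hi
  have hu0 : ∀ i ∉ U, u i = 0 := fun i hi => eq_zero_of_notMem_supp fun h => hi (hu h)
  -- `2 (u_{S \ T})²` pays for the entries of `x` that `T` misses; `hswap` and `hback` bound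
  -- it by the extra `2 (h_{T ∩ U})²` on the left, with `h = x - u`.
  have hpoint : ∀ i, (x - restrict u T) i ^ 2 + 2 * restrict (x - u) (T ∩ U) i ^ 2 ≤
      restrict x Uᶜ i ^ 2 + 3 * restrict (x - u) U i ^ 2 + 2 * restrict u (S \ T) i ^ 2 := by
    intro i
    by_cases hiT : i ∈ T <;> by_cases hiU : i ∈ U <;> by_cases hiS : i ∈ S <;>
      simp [_root_.restrict, hiT, hiU, hiS, hx0, hu0] <;>
      nlinarith [sq_nonneg (2 * x i - 3 * u i)]
  have hswap : euclNorm (restrict u (S \ T)) ^ 2 ≤ euclNorm (restrict u (T \ S)) ^ 2 := by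
    rw [euclNorm_restrict_sq, euclNorm_restrict_sq]
    refine Finset.sum_le_sum_of_card_le_of_forall_le (Finset.card_sdiff_le_card_sdiff_iff.2 hx)
      (fun j hj i hi => sq_le_sq.2 (hT i (Finset.mem_sdiff.1 hi).1 j (Finset.mem_sdiff.1 hj).2))
      fun i _ => sq_nonneg _
  have hback : euclNorm (restrict u (T \ S)) ^ 2 ≤ euclNorm (restrict (x - u) (T ∩ U)) ^ 2 := by
    simp only [euclNorm_sq]
    refine Finset.sum_le_sum fun i _ => ?_
    by_cases hiT : i ∈ T <;> by_cases hiU : i ∈ U <;> by_cases hiS : i ∈ S <;>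
      simp [_root_.restrict, hiT, hiU, hiS, hx0, hu0, sq_nonneg]
  have hsum := Finset.sum_le_sum fun i (_ : i ∈ Finset.univ) => hpoint i
  simp only [Finset.sum_add_distrib, ← Finset.mul_sum, ← euclNorm_sq] at hsum
  linarith

/-- For `V > b`, squaring and multiplying by `ρ² = 1 - δ²` gives
`(ρ² V - b)² ≤ δ² ρ² a² + δ² b² ≤ (δ ρ a + δ b)²`. -/
lemma le_div_sqrt_add_div_of_le_add_mul_sqrt {a b δ V : ℝ} (ha : 0 ≤ a) (hb : 0 ≤ b)
    (hδ₀ : 0 ≤ δ) (hδ₁ : δ < 1) (hV : V ≤ b + δ * √(a ^ 2 + V ^ 2)) :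
    V ≤ δ * a / √(1 - δ ^ 2) + b / (1 - δ) := by
  have h1δ : 0 < 1 - δ := by linarith
  have hρ2 : √(1 - δ ^ 2) ^ 2 = 1 - δ ^ 2 := Real.sq_sqrt (by nlinarith)
  have hρ : 0 < √(1 - δ ^ 2) := Real.sqrt_pos.2 (by nlinarith)
  set ρ := √(1 - δ ^ 2)
  have hsplit : δ * a / ρ + b / (1 - δ) = (δ * ρ * a + (1 + δ) * b) / ρ ^ 2 := by
    field_simp
    linear_combination b * hρ2
  rcases le_or_gt V b with hVb | hVb
  · have : b ≤ b / (1 - δ) := by rw [le_div_iff₀ h1δ]; nlinarith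
    have : 0 ≤ δ * a / ρ := by positivity
    linarith
  have hsq : (V - b) ^ 2 ≤ δ ^ 2 * (a ^ 2 + V ^ 2) := by
    have := pow_le_pow_left₀ (sub_nonneg.2 hVb.le) (sub_le_iff_le_add'.2 hV) 2
    rwa [mul_pow, Real.sq_sqrt (by positivity)] at this
  have key : (ρ ^ 2 * V - b) ^ 2 ≤ (δ * ρ * a + δ * b) ^ 2 := by
    have hid : (δ * ρ * a + δ * b) ^ 2 - (ρ ^ 2 * V - b) ^ 2 =
        ρ ^ 2 * (δ ^ 2 * (a ^ 2 + V ^ 2) - (V - b) ^ 2) + 2 * δ ^ 2 * ρ * a * b := by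
      linear_combination (b ^ 2 - ρ ^ 2 * V ^ 2) * hρ2
    have : 0 ≤ ρ ^ 2 * (δ ^ 2 * (a ^ 2 + V ^ 2) - (V - b) ^ 2) :=
      mul_nonneg (sq_nonneg ρ) (sub_nonneg.2 hsq)
    nlinarith [mul_nonneg (mul_nonneg (mul_nonneg hδ₀ hδ₀) (mul_nonneg hρ.le ha)) hb]
  have hlin := (abs_le_of_sq_le_sq' key (by positivity)).2
  rw [hsplit, le_div_iff₀ (by positivity)]
  linarith

lemma sqrt_sq_add_three_mul_add_sq_le (a p : ℝ) {q : ℝ} (hq : 0 ≤ q) :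
    √(a ^ 2 + 3 * (p + q) ^ 2) ≤ √(a ^ 2 + 3 * p ^ 2) + √3 * q := by
  rw [Real.sqrt_le_left (by positivity)]
  have h3p : 3 * p ≤ √3 * √(a ^ 2 + 3 * p ^ 2) := by
    rw [← Real.sqrt_mul (by norm_num)]
    exact Real.le_sqrt_of_sq_le (by nlinarith [sq_nonneg a])
  rw [add_sq (√_), mul_pow, Real.sq_sqrt (by positivity), Real.sq_sqrt (by norm_num)]
  nlinarith [mul_le_mul_of_nonneg_left h3p hq]

lemma sqrt_sq_add_three_mul_sq_le {a δ V q : ℝ} (ha : 0 ≤ a) (hδ₀ : 0 ≤ δ) (hδ₁ : δ < 1)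
    (hq : 0 ≤ q) (hV₀ : 0 ≤ V) (hV : V ≤ δ * a / √(1 - δ ^ 2) + q) :
    √(a ^ 2 + 3 * V ^ 2) ≤ √((1 + 2 * δ ^ 2) / (1 - δ ^ 2)) * a + √3 * q := by
  have hδ2 : 0 < 1 - δ ^ 2 := by nlinarith
  have hcoef :
      a ^ 2 + 3 * (δ * a / √(1 - δ ^ 2)) ^ 2 = (1 + 2 * δ ^ 2) / (1 - δ ^ 2) * a ^ 2 := by
    rw [div_pow, Real.sq_sqrt hδ2.le]
    field_simp
    ring
  calc √(a ^ 2 + 3 * V ^ 2) ≤ √(a ^ 2 + 3 * (δ * a / √(1 - δ ^ 2) + q) ^ 2) := by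
        gcongr
    _ ≤ √(a ^ 2 + 3 * (δ * a / √(1 - δ ^ 2)) ^ 2) + √3 * q :=
        sqrt_sq_add_three_mul_add_sq_le _ _ hq
    _ = √((1 + 2 * δ ^ 2) / (1 - δ ^ 2)) * a + √3 * q := by
        rw [hcoef, Real.sqrt_mul (by positivity), Real.sqrt_sq ha]

/-- bound on `‖x_S − x'‖` after the estimation and update steps, where
`x' = H_K(u)` is the hard thresholding of the least-squares solution `u` on `U`. -/
theorem cosamp_estimate_update_bound
    {m d K : ℕ} (A : Matrix (Fin m) (Fin d) ℝ) (xS : Fin d → ℝ) (e : Fin m → ℝ)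
    (δ3 δ4 : ℝ)
    (hxS : (supp xS).card ≤ K)
    (hRIP3 : RIP A (3 * K) δ3) (hRIP4 : RIP A (4 * K) δ4)
    (U : Finset (Fin d)) (hU : U.card ≤ 3 * K)
    (u : Fin d → ℝ) (hLS : LeastSq A (A.mulVec xS + e) U u)
    (T : Finset (Fin d)) (hTcard : T.card = K)
    (hThresh : ∀ i ∈ T, ∀ j ∉ T, |u j| ≤ |u i|)
    (x' : Fin d → ℝ) (hx' : x' = restrict u T) :
    euclNorm (xS - x') ≤
      Real.sqrt ((1 + 2 * δ4 ^ 2) / (1 - δ4 ^ 2)) * euclNorm (restrict xS Uᶜ) +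
        Real.sqrt 3 * (Real.sqrt (1 + δ3) / (1 - δ4)) * euclNorm e := by
  subst hx'
  set a := euclNorm (restrict xS Uᶜ)
  set V := euclNorm (restrict (xS - u) U)
  have hpyth : euclNorm (xS - u) = √(a ^ 2 + V ^ 2) := by
    rw [← Real.sqrt_sq (euclNorm_nonneg (xS - u)),
      euclNorm_sq_eq_restrict_add_restrict_compl _ U, restrict_sub_of_supp_subset hLS.1, add_comm]
  have hest := hLS.euclNorm_restrict_sub_le hRIP4 hRIP3 hU
    ((Finset.card_union_le _ _).trans (by omega))
  rw [hpyth] at hest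
  have hb : 0 ≤ √(1 + δ3) * euclNorm e := mul_nonneg (Real.sqrt_nonneg _) (euclNorm_nonneg e)
  have hV := le_div_sqrt_add_div_of_le_add_mul_sqrt (euclNorm_nonneg _) hb hRIP4.1.le
    hRIP4.2.1 hest
  calc euclNorm (xS - restrict u T) ≤ √(a ^ 2 + 3 * V ^ 2) :=
        Real.le_sqrt_of_sq_le (euclNorm_sub_restrict_threshold_sq_le (hTcard ▸ hxS) hLS.1 hThresh)
    _ ≤ √((1 + 2 * δ4 ^ 2) / (1 - δ4 ^ 2)) * a + √3 * (√(1 + δ3) * euclNorm e / (1 - δ4)) :=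
        sqrt_sq_add_three_mul_sq_le (euclNorm_nonneg _) hRIP4.1.le hRIP4.2.1
          (div_nonneg hb (sub_nonneg.2 hRIP4.2.1.le)) (euclNorm_nonneg _) hV
    _ = _ := by ring
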